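/- For every HGT-free σ-reconciliation (T,S,μ,σ) satisfying axiom (R5), the chain of subgraph inclusions Θ(T,ℓ_μ) ⊆ Θ(T,ℓ̂_T) ⊆ 𝔅_sym(T,σ) ⊆ 𝔅(T,σ) holds, where undirected graphs are identified with symmetric digraphs. -/

import Mathlib

/-- A planted phylogenetic rooted tree, encoded by a parent function on a
finite vertex set.  The root `0_T` is a fixed point of `parent`; every vertex
reaches the root by iterating `parent`; the root has exactly one child
(`planted`); and every inner vertex (non-root vertex having a child) has at
least two children (`phylo`). -/
structure PPTree where
  V : Type
  [fintypeV : Fintype V]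
  [decEqV : DecidableEq V]
  root : V
  parent : V → V
  parent_root : parent root = root
  reach : ∀ v : V, ∃ n : ℕ, parent^[n] v = root
  planted : ∃! v : V, v ≠ root ∧ parent v = root
  phylo : ∀ v : V, v ≠ root → (∃ u, parent u = v ∧ u ≠ v) →
      ∃ u w, parent u = v ∧ parent w = v ∧ u ≠ w ∧ u ≠ v ∧ w ≠ v

attribute [instance] PPTree.fintypeV PPTree.decEqV

namespace PPTree

variable (T : PPTree)

/-- `T.le x y` means `x ⪯_T y`, i.e. `y` is an ancestor of `x` (or `x = y`). -/
def le (x y : T.V) : Prop := ∃ n : ℕ, T.parent^[n] x = y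

/-- `T.lt x y` means `x ≺_T y`. -/
def lt (x y : T.V) : Prop := T.le x y ∧ x ≠ y

/-- Leaves are the `⪯_T`-minimal vertices, i.e. vertices without children. -/
def isLeaf (v : T.V) : Prop := ∀ u, T.parent u = v → u = v

/-- Inner vertices: neither leaves nor the planted root. -/
def inner (v : T.V) : Prop := v ≠ T.root ∧ ¬ T.isLeaf v

/-- The last common ancestor of two vertices: the `⪯_T`-minimal common
ancestor. -/
noncomputable def lca (x y : T.V) : T.V :=
  @Classical.epsilon _ ⟨T.root⟩
    fun v => T.le x v ∧ T.le y v ∧ ∀ w, T.le x w → T.le y w → T.le v w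

/-- The last common ancestor of a set of vertices. -/
noncomputable def lcaSet (A : Set T.V) : T.V :=
  @Classical.epsilon _ ⟨T.root⟩
    fun v => (∀ a ∈ A, T.le a v) ∧ ∀ w, (∀ a ∈ A, T.le a w) → T.le v w

/-- `ρ_T`, the unique child of the planted root. -/
noncomputable def rho : T.V := T.planted.choose

theorem rho_ne_root : T.rho ≠ T.root := T.planted.choose_spec.1.1

/-- Edges of `T`, identified with their child endpoint: the vertex `v ≠ 0_T`
represents the edge `(parent v, v)`. -/
abbrev Edge := {v : T.V // v ≠ T.root}

/-- The union `V(T) ∪ E(T)`. -/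
abbrev VE := T.V ⊕ T.Edge

/-- The ancestor order `⪯_T` extended to `V(T) ∪ E(T)`: for an edge `e = uv`
(`u` the parent of `v`), `x ⪯ e` iff `x ⪯ v`, `e ⪯ x` iff `u ⪯ x`, and
`e ⪯ f` iff the child endpoints are comparable accordingly. -/
def leVE : T.VE → T.VE → Prop
  | Sum.inl x, Sum.inl y => T.le x y
  | Sum.inl x, Sum.inr e => T.le x e.1
  | Sum.inr e, Sum.inl y => T.le (T.parent e.1) y
  | Sum.inr e, Sum.inr f => T.le e.1 f.1

def ltVE (a b : T.VE) : Prop := T.leVE a b ∧ a ≠ b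

/-- Two elements of `V(T) ∪ E(T)` are comparable. -/
def cmpVE (a b : T.VE) : Prop := T.leVE a b ∨ T.leVE b a

/-- Membership in `L(T)` for elements of `V(T) ∪ E(T)`. -/
def isLeafVE : T.VE → Prop
  | Sum.inl v => T.isLeaf v
  | Sum.inr _ => False

/-- Map an element of `V(T) ∪ E(T)` to a vertex (an edge `uv` is sent to its
child endpoint `v`). -/
def toVertex : T.VE → T.V
  | Sum.inl v => v
  | Sum.inr e => e.1

end PPTree

/-- Axioms (R0)–(R3) of a reconciliation map `μ : V(T) → V(S) ∪ E(S)`. -/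
structure IsRecon (T S : PPTree) (μ : T.V → S.VE) : Prop where
  R0 : ∀ x, μ x = Sum.inl S.root ↔ x = T.root
  R1 : ∀ x, S.isLeafVE (μ x) ↔ T.isLeaf x
  R2 : ∀ x y, T.lt y x → (∃ u, μ x = Sum.inl u) → (∃ v, μ y = Sum.inl v) → μ x ≠ μ y
  R3 : ∀ x y, T.lt y x → ¬ S.ltVE (μ x) (μ y)

/-- A reconciliation is HGT-free if the images of the endpoints of every edge
of `T` are `⪯_S`-comparable. -/
def IsHGTFree (T S : PPTree) (μ : T.V → S.VE) : Prop :=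
  ∀ v : T.V, v ≠ T.root → S.cmpVE (μ (T.parent v)) (μ v)

/-- `(T,S,μ,σ)` is a σ-reconciliation when `μ` restricted to `L(T)` equals
`σ`. -/
def SigmaCompat (T S : PPTree) (μ : T.V → S.VE) (σ : T.V → S.V) : Prop :=
  ∀ x, T.isLeaf x → μ x = Sum.inl (σ x)

/-- A time map for `T`. -/
def IsTimeMap (T : PPTree) (τ : T.V → ℝ) : Prop :=
  ∀ x y, T.lt x y → τ x < τ y

/-- Axioms (S0)–(S3) of a relaxed scenario `(T,S,μ,τ_T,τ_S)`. -/
structure IsRelaxedScenario (T S : PPTree) (μ : T.V → S.VE)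
    (τT : T.V → ℝ) (τS : S.V → ℝ) : Prop where
  timeT : IsTimeMap T τT
  timeS : IsTimeMap S τS
  S0 : ∀ x, μ x = Sum.inl S.root ↔ x = T.root
  S1 : ∀ x, S.isLeafVE (μ x) ↔ T.isLeaf x
  S2 : ∀ x v, μ x = Sum.inl v → τS v = τT x
  S3 : ∀ x (e : S.Edge), μ x = Sum.inr e → τS e.1 < τT x ∧ τT x < τS (S.parent e.1)

/-- Axiom (R5) for a reconciliation `(T,S,μ)`: whenever `μ(x) ∈ V⁰(S)`,
(i) `μ(x) = lca_S(μ(v'),μ(v''))` for at least two distinct children `v',v''`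
of `x`, and (ii) the images of any two distinct children of `x` are
`⪯_S`-incomparable. -/
def R5 (T S : PPTree) (μ : T.V → S.VE) : Prop :=
  ∀ x u, μ x = Sum.inl u → u ≠ S.root → ¬ S.isLeaf u →
    ((∃ v' v'' : T.V, v' ≠ v'' ∧
        T.parent v' = x ∧ v' ≠ x ∧ T.parent v'' = x ∧ v'' ≠ x ∧
        u = S.lca (S.toVertex (μ v')) (S.toVertex (μ v''))) ∧
     (∀ v' v'' : T.V, T.parent v' = x → v' ≠ x → T.parent v'' = x → v'' ≠ x →
        v' ≠ v'' → ¬ S.cmpVE (μ v') (μ v'')))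

/-- The event label `ℓ_μ(u)` is a speciation `•`, i.e. `μ(u) ∈ V⁰(S)`. -/
def SpecEvent (T S : PPTree) (μ : T.V → S.VE) (u : T.V) : Prop :=
  ∃ v : S.V, μ u = Sum.inl v ∧ v ≠ S.root ∧ ¬ S.isLeaf v

/-- Edge `xy` of the orthology graph `Θ(T,ℓ_μ)`: `x,y` are distinct leaves
whose last common ancestor is labeled as a speciation by `ℓ_μ`. -/
def ThetaMu (T S : PPTree) (μ : T.V → S.VE) (x y : T.V) : Prop :=
  T.isLeaf x ∧ T.isLeaf y ∧ x ≠ y ∧ SpecEvent T S μ (T.lca x y)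

/-- The extremal event labeling `ℓ̂_T` assigns a duplication `□` to `u`:
some two distinct children `v',v''` of `u` satisfy
`σ(L(T(v'))) ∩ σ(L(T(v''))) ≠ ∅`. -/
def ExtremalDup (T : PPTree) {Y : Type} (σ : T.V → Y) (u : T.V) : Prop :=
  ∃ v' v'' : T.V, v' ≠ v'' ∧
    T.parent v' = u ∧ v' ≠ u ∧ T.parent v'' = u ∧ v'' ≠ u ∧
    ∃ l l' : T.V, T.isLeaf l ∧ T.isLeaf l' ∧ T.le l v' ∧ T.le l' v'' ∧ σ l = σ l'

/-- Edge `xy` of the orthology graph `Θ(T,ℓ̂_T)` of the extremal event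
labeling: `x,y` are distinct leaves whose last common ancestor is labeled `•`
by `ℓ̂_T`. -/
def ThetaHat (T : PPTree) {Y : Type} (σ : T.V → Y) (x y : T.V) : Prop :=
  T.isLeaf x ∧ T.isLeaf y ∧ x ≠ y ∧ ¬ ExtremalDup T σ (T.lca x y)

/-- Arc `(x,y)` of the best match graph `𝔅(T,σ)`: `y` is a best match of
`x`. -/
def BMArc (T : PPTree) {Y : Type} (σ : T.V → Y) (x y : T.V) : Prop :=
  T.isLeaf x ∧ T.isLeaf y ∧ σ x ≠ σ y ∧
    ∀ y' : T.V, T.isLeaf y' → σ y' = σ y → T.le (T.lca x y) (T.lca x y')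

/-! HGT-freeness together with (R3) makes `μ` monotone along `T`. Hence, if two distinct
children of a vertex `u` both have a leaf of species `s` below them, their images both lie
above `s` and are comparable, which (R5)(ii) forbids when `u` is a speciation; so every
`ℓ_μ`-speciation is an `ℓ̂_T`-speciation. If `lca(x,y)` is an `ℓ̂_T`-speciation, the children
of `lca(x,y)` towards `x` and `y` carry disjoint colour sets, so `σ(x) ≠ σ(y)`, and no leaf of
colour `σ(y)` lies below the child towards `x`; this forces `lca(x,y) ⪯ lca(x,y')` for every
such leaf `y'`. -/

namespace PPTree

variable {T : PPTree}

theorem le.refl (x : T.V) : T.le x x := ⟨0, rfl⟩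

theorem le.trans {x y z : T.V} (h₁ : T.le x y) (h₂ : T.le y z) : T.le x z := by
  obtain ⟨m, rfl⟩ := h₁
  obtain ⟨n, rfl⟩ := h₂
  exact ⟨n + m, Function.iterate_add_apply _ _ _ _⟩

theorem le_parent (x : T.V) : T.le x (T.parent x) := ⟨1, rfl⟩

theorem le_root (x : T.V) : T.le x T.root := T.reach x

theorem eq_root_of_isPeriodicPt {x : T.V} {n : ℕ} (hn : 0 < n)
    (hx : Function.IsPeriodicPt T.parent n x) : x = T.root := by
  obtain ⟨k, hk⟩ := T.reach x
  have hkn : k ≤ n * k := Nat.le_mul_of_pos_left k hn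
  calc x = T.parent^[n * k] x := (hx.mul_const k).eq.symm
    _ = T.parent^[n * k - k] (T.parent^[k] x) := by
      rw [← Function.iterate_add_apply, Nat.sub_add_cancel hkn]
    _ = T.root := by rw [hk, Function.iterate_fixed T.parent_root]

theorem parent_ne_self {x : T.V} (hx : x ≠ T.root) : T.parent x ≠ x :=
  fun h => hx (eq_root_of_isPeriodicPt one_pos h)

theorem le.antisymm {x y : T.V} (h₁ : T.le x y) (h₂ : T.le y x) : x = y := by
  obtain ⟨m, rfl⟩ := h₁
  obtain ⟨n, hn⟩ := h₂
  rcases Nat.eq_zero_or_pos (n + m) with h | h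
  · obtain rfl : m = 0 := by omega
    rfl
  · have hx : x = T.root := eq_root_of_isPeriodicPt h <| by
      rw [Function.IsPeriodicPt, Function.IsFixedPt, Function.iterate_add_apply, hn]
    subst hx
    exact (Function.iterate_fixed T.parent_root m).symm

theorem le.eq_of_isLeaf {x y : T.V} (hx : T.isLeaf x) (h : T.le y x) : y = x := by
  obtain ⟨n, hn⟩ := h
  induction n generalizing y with
  | zero => exact hn
  | succ n ih =>
    rw [Function.iterate_succ_apply] at hn
    exact hx y (ih hn)

theorem le.total_of_le {x y z : T.V} (hy : T.le x y) (hz : T.le x z) :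
    T.le y z ∨ T.le z y := by
  obtain ⟨m, rfl⟩ := hy
  obtain ⟨n, rfl⟩ := hz
  rcases Nat.le_total m n with h | h
  · exact Or.inl ⟨n - m, by rw [← Function.iterate_add_apply, Nat.sub_add_cancel h]⟩
  · exact Or.inr ⟨m - n, by rw [← Function.iterate_add_apply, Nat.sub_add_cancel h]⟩

theorem le.eq_or_parent_le {x y : T.V} (h : T.le x y) : y = x ∨ T.le (T.parent x) y := by
  obtain ⟨_ | k, rfl⟩ := h
  · exact Or.inl rfl
  · exact Or.inr ⟨k, (Function.iterate_succ_apply _ _ _).symm⟩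

theorem le.le_or_parent_le {x y z : T.V} (hy : T.le x y) (hz : T.le x z) :
    T.le z y ∨ T.le (T.parent y) z := by
  rcases hy.total_of_le hz with h | h
  · rcases h.eq_or_parent_le with rfl | h
    · exact Or.inl (le.refl _)
    · exact Or.inr h
  · exact Or.inl h

theorem exists_child_of_le {x z : T.V} (h : T.le x z) (hne : x ≠ z) :
    ∃ c, T.parent c = z ∧ c ≠ z ∧ T.le x c := by
  obtain ⟨k, hk, hmin⟩ : ∃ k, T.parent^[k] x = z ∧ ∀ j < k, T.parent^[j] x ≠ z :=
    ⟨Nat.find h, Nat.find_spec h, fun _ => Nat.find_min h⟩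
  obtain ⟨j, rfl⟩ : ∃ j, k = j + 1 := Nat.exists_eq_succ_of_ne_zero <| by
    rintro rfl
    exact hne hk
  refine ⟨T.parent^[j] x, ?_, hmin j j.lt_succ_self, ⟨j, rfl⟩⟩
  rwa [Function.iterate_succ_apply'] at hk

theorem lca_spec (x y : T.V) :
    T.le x (T.lca x y) ∧ T.le y (T.lca x y) ∧
      ∀ w, T.le x w → T.le y w → T.le (T.lca x y) w := by
  classical
  have hP : ∃ n, T.le y (T.parent^[n] x) := by
    obtain ⟨n, hn⟩ := T.reach x
    exact ⟨n, hn ▸ le_root y⟩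
  refine Classical.epsilon_spec (p := fun v => T.le x v ∧ T.le y v ∧ ∀ w, T.le x w → T.le y w →
    T.le v w) ⟨T.parent^[Nat.find hP] x, ⟨_, rfl⟩, Nat.find_spec hP, ?_⟩
  rintro w ⟨k, rfl⟩ hyw
  have hk : Nat.find hP ≤ k := Nat.find_min' hP hyw
  exact ⟨k - Nat.find hP, by rw [← Function.iterate_add_apply, Nat.sub_add_cancel hk]⟩

theorem le_lca_left (x y : T.V) : T.le x (T.lca x y) := (lca_spec x y).1

theorem le_lca_right (x y : T.V) : T.le y (T.lca x y) := (lca_spec x y).2.1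

theorem lca_le {x y w : T.V} (hx : T.le x w) (hy : T.le y w) : T.le (T.lca x y) w :=
  (lca_spec x y).2.2 w hx hy

theorem lca_comm (x y : T.V) : T.lca x y = T.lca y x :=
  (lca_le (le_lca_right y x) (le_lca_left y x)).antisymm
    (lca_le (le_lca_right x y) (le_lca_left x y))

theorem lca_ne_left_of_isLeaf {x y : T.V} (hx : T.isLeaf x) (hxy : x ≠ y) :
    T.lca x y ≠ x := fun h =>
  hxy ((h ▸ le_lca_right x y).eq_of_isLeaf hx).symm

theorem exists_children_of_lca {x y : T.V} (hx : T.lca x y ≠ x) (hy : T.lca x y ≠ y) :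
    ∃ c c', c ≠ c' ∧ T.parent c = T.lca x y ∧ c ≠ T.lca x y ∧
      T.parent c' = T.lca x y ∧ c' ≠ T.lca x y ∧ T.le x c ∧ T.le y c' := by
  obtain ⟨c, hc, hcz, hxc⟩ := exists_child_of_le (le_lca_left x y) (Ne.symm hx)
  obtain ⟨c', hc', hcz', hyc'⟩ := exists_child_of_le (le_lca_right x y) (Ne.symm hy)
  refine ⟨c, c', ?_, hc, hcz, hc', hcz', hxc, hyc'⟩
  rintro rfl
  exact hcz ((hc ▸ le_parent c).antisymm (lca_le hxc hyc'))

theorem leVE_refl (a : T.VE) : T.leVE a a := by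
  cases a <;> exact le.refl _

theorem leVE_trans {a b c : T.VE} (h₁ : T.leVE a b) (h₂ : T.leVE b c) : T.leVE a c := by
  cases a <;> cases b <;> cases c <;> simp only [leVE] at h₁ h₂ ⊢
  case inl.inr.inl => exact h₁.trans ((le_parent _).trans h₂)
  case inr.inl.inr => exact (le_parent _).trans (h₁.trans h₂)
  case inr.inr.inl =>
    rcases h₁.eq_or_parent_le with h | h
    · exact h ▸ h₂
    · exact h.trans ((le_parent _).trans h₂)
  all_goals exact h₁.trans h₂

theorem cmpVE_of_le_of_le {w : T.V} {a b : T.VE}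
    (ha : T.leVE (Sum.inl w) a) (hb : T.leVE (Sum.inl w) b) : T.cmpVE a b := by
  cases a <;> cases b <;> simp only [leVE] at ha hb <;> simp only [cmpVE, leVE]
  case inl.inr => exact hb.le_or_parent_le ha
  case inr.inl => exact (ha.le_or_parent_le hb).symm
  all_goals exact ha.total_of_le hb

end PPTree

section Reconciliation

variable {T S : PPTree} {μ : T.V → S.VE}

theorem IsRecon.leVE_parent (hrec : IsRecon T S μ) (hfree : IsHGTFree T S μ) {v : T.V}
    (hv : v ≠ T.root) : S.leVE (μ v) (μ (T.parent v)) := by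
  rcases hfree v hv with h | h
  · by_cases he : μ (T.parent v) = μ v
    · exact he ▸ PPTree.leVE_refl _
    · exact absurd ⟨h, he⟩ (hrec.R3 _ _ ⟨PPTree.le_parent v, (PPTree.parent_ne_self hv).symm⟩)
  · exact h

theorem IsRecon.leVE_of_le (hrec : IsRecon T S μ) (hfree : IsHGTFree T S μ) {x y : T.V}
    (h : T.le x y) (hy : y ≠ T.root) : S.leVE (μ x) (μ y) := by
  obtain ⟨n, rfl⟩ := h
  induction n with
  | zero => exact PPTree.leVE_refl _
  | succ n ih =>
    rw [Function.iterate_succ_apply'] at hy ⊢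
    have hn : T.parent^[n] x ≠ T.root := fun h => hy (h ▸ T.parent_root)
    exact PPTree.leVE_trans (ih hn) (hrec.leVE_parent hfree hn)

theorem not_extremalDup_of_specEvent (hrec : IsRecon T S μ) (hfree : IsHGTFree T S μ)
    {σ : T.V → S.V} (hσ : SigmaCompat T S μ σ) (hR5 : R5 T S μ) {u : T.V}
    (hu : SpecEvent T S μ u) : ¬ ExtremalDup T σ u := by
  obtain ⟨s, hμu, hs, hsl⟩ := hu
  rintro ⟨v', v'', hne, hv', hv'u, hv'', hv''u, l, l', hl, hl', hlv', hlv'', hσl⟩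
  have not_root {v : T.V} (hv : T.parent v = u) (hvu : v ≠ u) : v ≠ T.root :=
    fun h => hvu (by rw [← hv, h, T.parent_root])
  have h₁ := hrec.leVE_of_le hfree hlv' (not_root hv' hv'u)
  have h₂ := hrec.leVE_of_le hfree hlv'' (not_root hv'' hv''u)
  rw [hσ l hl] at h₁
  rw [hσ l' hl', ← hσl] at h₂
  exact (hR5 u s hμu hs hsl).2 v' v'' hv' hv'u hv'' hv''u hne (PPTree.cmpVE_of_le_of_le h₁ h₂)

end Reconciliation

theorem bmArc_of_not_extremalDup {T : PPTree} {Y : Type} {σ : T.V → Y} {x y : T.V}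
    (hx : T.isLeaf x) (hy : T.isLeaf y) (hxy : x ≠ y)
    (hdup : ¬ ExtremalDup T σ (T.lca x y)) : BMArc T σ x y := by
  obtain ⟨c, c', hcc', hc, hcz, hc', hcz', hxc, hyc'⟩ :=
    PPTree.exists_children_of_lca (PPTree.lca_ne_left_of_isLeaf hx hxy)
      (T.lca_comm x y ▸ PPTree.lca_ne_left_of_isLeaf hy hxy.symm)
  have colour_ne {l l' : T.V} (hl : T.isLeaf l) (hl' : T.isLeaf l') (hlc : T.le l c)
      (hlc' : T.le l' c') : σ l ≠ σ l' := fun h =>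
    hdup ⟨c, c', hcc', hc, hcz, hc', hcz', l, l', hl, hl', hlc, hlc', h⟩
  refine ⟨hx, hy, colour_ne hx hy hxc hyc', fun y' hy' hσy' => ?_⟩
  rcases hxc.le_or_parent_le (PPTree.le_lca_left x y') with h | h
  · exact absurd hσy' (colour_ne hy' hy ((PPTree.le_lca_right x y').trans h) hyc')
  · exact hc ▸ h

/-- For every HGT-free σ-reconciliation `(T,S,μ,σ)`
satisfying (R5), `Θ(T,ℓ_μ) ⊆ Θ(T,ℓ̂_T) ⊆ 𝔅_sym(T,σ) ⊆ 𝔅(T,σ)`,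
identifying undirected graphs with symmetric digraphs. -/
theorem orthology_subset_rbmg
    (T S : PPTree) (μ : T.V → S.VE) (σ : T.V → S.V)
    (hrec : IsRecon T S μ) (hfree : IsHGTFree T S μ)
    (hσ : SigmaCompat T S μ σ) (hR5 : R5 T S μ) :
    (∀ x y : T.V, ThetaMu T S μ x y → ThetaHat T σ x y) ∧
    (∀ x y : T.V, ThetaHat T σ x y → BMArc T σ x y ∧ BMArc T σ y x) ∧
    (∀ x y : T.V, BMArc T σ x y ∧ BMArc T σ y x → BMArc T σ x y) := by
  refine ⟨?_, ?_, fun x y h => h.1⟩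
  · rintro x y ⟨hx, hy, hxy, hspec⟩
    exact ⟨hx, hy, hxy, not_extremalDup_of_specEvent hrec hfree hσ hR5 hspec⟩
  · rintro x y ⟨hx, hy, hxy, hdup⟩
    exact ⟨bmArc_of_not_extremalDup hx hy hxy hdup,
      bmArc_of_not_extremalDup hy hx hxy.symm (T.lca_comm x y ▸ hdup)⟩
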